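/- Let (Ω, μ) be a measure space and t > 0. For probability densities ρ, ρ' on (Ω, μ), let d_P(ρ, ρ') = arccos(∫ √(ρ(x) ρ'(x)) dμ(x)) and k_PF(ρ, ρ') = exp(-t · d_P(ρ, ρ')). Then the Persistence Fisher kernel is infinitely divisible: for every natural number m ≥ 1, the kernel k_m(ρ, ρ') = exp(-(t/m) · d_P(ρ, ρ')) is positive definite (i.e., ∑_{i,j} c_i c_j k_m(ρ_i, ρ_j) ≥ 0 for all finite families of probability densities ρ_i and real coefficients c_i) and satisfies (k_m(ρ, ρ'))^m = k_PF(ρ, ρ') for all probability densities ρ, ρ'. -/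

import Mathlib

/-!
Write `G i j = ∫ √ρᵢ √ρⱼ dμ` for the Bhattacharyya coefficients of finitely many densities: `G`
is the Gram matrix of the unit vectors `√ρᵢ ∈ L²(μ)`, so it is positive semidefinite with entries
in `[0, 1]`. Since `arccos = π/2 - arcsin`, the kernel is `exp (-τπ/2) · exp (τ · arcsin G i j)`
with `τ = t/m`. Both `arcsin` (through the binomial series of `1/√(1 - u)`, integrated termwise)
and `exp (τ ·)` have power series with nonnegative coefficients, so by the Schur product theorem
they preserve positive semidefiniteness when applied entrywise; as the `arcsin` series is only
used on `(-1, 1)`, the argument is first run for `r • G` with `r < 1` and then `r → 1`.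
-/

open MeasureTheory Real Filter Topology

lemma Ring.choose_add_natCast_sub_one_nonneg {a : ℝ} (ha : 0 < a) (n : ℕ) :
    0 ≤ Ring.choose (a + n - 1) n := by
  have h := Ring.factorial_nsmul_multichoose_eq_ascPochhammer a n
  rw [Polynomial.ascPochhammer_smeval_eq_eval, nsmul_eq_mul] at h
  rw [← Ring.multichoose_eq]
  exact (mul_nonneg_iff_of_pos_left (by positivity)).mp (h ▸ (ascPochhammer_pos n a ha).le)

lemma hasSum_choose_mul_pow_one_div_sqrt {u : ℝ} (hu : |u| < 1) :
    HasSum (fun n : ℕ => Ring.choose (1 / 2 + n - 1 : ℝ) n * u ^ n) (1 / √(1 - u)) := by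
  have h := (one_div_one_sub_rpow_hasFPowerSeriesOnBall_zero (1 / 2)).hasSum
    (y := u) (by simpa [enorm_eq_nnnorm, ← NNReal.coe_lt_coe] using hu)
  simp only [FormalMultilinearSeries.ofScalars_apply_eq, zero_add, smul_eq_mul] at h
  rwa [← sqrt_eq_rpow] at h

lemma integral_one_div_sqrt_one_sub_sq {s : ℝ} (hs : |s| < 1) :
    ∫ t in (0 : ℝ)..s, 1 / √(1 - t ^ 2) = arcsin s := by
  have hmem {t : ℝ} (ht : t ∈ Set.uIcc 0 s) : |t| < 1 :=
    (by simpa using Set.abs_sub_left_of_mem_uIcc ht : |t| ≤ |s|).trans_lt hs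
  rw [intervalIntegral.integral_deriv_eq_sub' arcsin deriv_arcsin, arcsin_zero, sub_zero]
  · intro t ht
    have := abs_lt.mp (hmem ht)
    exact (hasDerivAt_arcsin (by linarith) (by linarith)).differentiableAt
  · refine ContinuousOn.div continuousOn_const (by fun_prop) fun t ht => ?_
    have := (sq_lt_one_iff_abs_lt_one t).mpr (hmem ht)
    exact (sqrt_pos.mpr (by linarith)).ne'

lemma hasSum_arcsin {s : ℝ} (hs : |s| < 1) :
    HasSum (fun n : ℕ => Ring.choose (1 / 2 + n - 1 : ℝ) n / (2 * n + 1) * s ^ (2 * n + 1))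
      (arcsin s) := by
  have hcoeff (n : ℕ) := Ring.choose_add_natCast_sub_one_nonneg one_half_pos n
  have hsq_le {t : ℝ} (ht : t ∈ Set.uIoc 0 s) : t ^ 2 ≤ s ^ 2 :=
    sq_le_sq.mpr (by simpa using Set.abs_sub_left_of_mem_uIcc (Set.uIoc_subset_uIcc ht))
  have habs_sq_lt {t : ℝ} (ht : t ^ 2 ≤ s ^ 2) : |t ^ 2| < 1 := by
    rw [abs_of_nonneg (sq_nonneg t)]
    nlinarith [sq_abs s, abs_nonneg s]
  have hseries := intervalIntegral.hasSum_integral_of_dominated_convergence (μ := volume)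
    (a := 0) (b := s) (F := fun (n : ℕ) t => Ring.choose (1 / 2 + n - 1 : ℝ) n * (t ^ 2) ^ n)
    (fun (n : ℕ) _ => Ring.choose (1 / 2 + n - 1 : ℝ) n * (s ^ 2) ^ n) (fun n => by fun_prop)
    (fun n => ae_of_all _ fun t ht => by
      rw [norm_eq_abs, abs_mul, abs_of_nonneg (hcoeff n), abs_of_nonneg (by positivity)]
      exact mul_le_mul_of_nonneg_left (pow_le_pow_left₀ (sq_nonneg t) (hsq_le ht) n) (hcoeff n))
    (ae_of_all _ fun _ _ => (hasSum_choose_mul_pow_one_div_sqrt (habs_sq_lt le_rfl)).summable)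
    intervalIntegrable_const
    (ae_of_all _ fun t ht => hasSum_choose_mul_pow_one_div_sqrt (habs_sq_lt (hsq_le ht)))
  rw [integral_one_div_sqrt_one_sub_sq hs] at hseries
  have hterm (n : ℕ) : ∫ t in (0 : ℝ)..s, Ring.choose (1 / 2 + n - 1 : ℝ) n * (t ^ 2) ^ n =
      Ring.choose (1 / 2 + n - 1 : ℝ) n / (2 * n + 1) * s ^ (2 * n + 1) := by
    simp_rw [intervalIntegral.integral_const_mul, ← pow_mul, integral_pow]
    push_cast
    ring
  simpa only [hterm] using hseries

namespace Matrix

variable {ι : Type*} [Fintype ι]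

lemma isClosed_setOf_posSemidef : IsClosed {A : Matrix ι ι ℝ | A.PosSemidef} := by
  simp only [posSemidef_iff_dotProduct_mulVec, Set.ofPred_and, Set.ofPred_forall]
  refine .inter (isClosed_eq (by fun_prop) continuous_id) (isClosed_iInter fun x => ?_)
  exact isClosed_le continuous_const
    (continuous_const.dotProduct (continuous_id.matrix_mulVec continuous_const))

lemma PosSemidef.sum_sum_mul_mul_nonneg {A : Matrix ι ι ℝ} (hA : A.PosSemidef) (c : ι → ℝ) :
    0 ≤ ∑ i, ∑ j, c i * c j * A i j := by
  simpa [dotProduct, mulVec, Finset.mul_sum, mul_comm, mul_left_comm] using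
    hA.dotProduct_mulVec_nonneg c

lemma PosSemidef.map_pow {A : Matrix ι ι ℝ} (hA : A.PosSemidef) (n : ℕ) :
    (A.map (· ^ n)).PosSemidef := by
  induction n with
  | zero => simpa [vecMulVec, map] using posSemidef_vecMulVec_self_star (1 : ι → ℝ)
  | succ n ih =>
    have hsucc : A.map (· ^ (n + 1)) = A.map (· ^ n) ⊙ A := by
      ext i j
      simp [pow_succ]
    rw [hsucc]
    exact ih.hadamard hA

lemma PosSemidef.map_of_hasSum {A : Matrix ι ι ℝ} (hA : A.PosSemidef) {f : ℝ → ℝ} {a : ℕ → ℝ}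
    (ha : ∀ k, 0 ≤ a k) {e : ℕ → ℕ}
    (hf : ∀ i j, HasSum (fun k => a k * A i j ^ e k) (f (A i j))) :
    (A.map f).PosSemidef := by
  have hsum : HasSum (fun k => a k • A.map (· ^ e k)) (A.map f) :=
    Pi.hasSum.mpr fun i => Pi.hasSum.mpr fun j => hf i j
  refine isClosed_setOf_posSemidef.mem_of_tendsto hsum.tendsto_sum_nat (.of_forall fun n => ?_)
  exact posSemidef_sum _ fun k _ => (hA.map_pow (e k)).smul (ha k)

lemma PosSemidef.map_arcsin {A : Matrix ι ι ℝ} (hA : A.PosSemidef) (h : ∀ i j, |A i j| < 1) :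
    (A.map arcsin).PosSemidef :=
  hA.map_of_hasSum (fun k => div_nonneg (Ring.choose_add_natCast_sub_one_nonneg one_half_pos k)
    (by positivity)) fun i j => hasSum_arcsin (h i j)

lemma PosSemidef.map_exp_mul {A : Matrix ι ι ℝ} (hA : A.PosSemidef) {τ : ℝ} (hτ : 0 ≤ τ) :
    (A.map fun x => exp (τ * x)).PosSemidef := by
  refine hA.map_of_hasSum (a := fun k => τ ^ k / k.factorial) (e := id) (fun k => by positivity)
    fun i j => ?_
  simpa [exp_eq_exp_ℝ, mul_pow, div_mul_eq_mul_div] using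
    NormedSpace.expSeries_div_hasSum_exp (τ * A i j)

lemma PosSemidef.map_exp_neg_mul_arccos {A : Matrix ι ι ℝ} (hA : A.PosSemidef)
    (h : ∀ i j, |A i j| ≤ 1) {τ : ℝ} (hτ : 0 ≤ τ) :
    (A.map fun x => exp (-τ * arccos x)).PosSemidef := by
  have hscaled : ∀ r ∈ Set.Ico (0 : ℝ) 1,
      ((r • A).map fun x => exp (-τ * arccos x)).PosSemidef := by
    intro r ⟨hr0, hr1⟩
    have hrA (i j : ι) : |(r • A) i j| < 1 := by
      rw [smul_apply, smul_eq_mul, abs_mul, abs_of_nonneg hr0]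
      nlinarith [h i j, abs_nonneg (A i j)]
    have heq : ((r • A).map fun x => exp (-τ * arccos x)) =
        exp (-τ * (π / 2)) • ((r • A).map arcsin).map fun x => exp (τ * x) := by
      ext i j
      simp only [map_apply, smul_apply, smul_eq_mul, arccos_eq_pi_div_two_sub_arcsin, ← exp_add]
      ring_nf
    rw [heq]
    exact (((hA.smul hr0).map_arcsin hrA).map_exp_mul hτ).smul (exp_pos _).le
  have hlim : Tendsto (fun r : ℝ => (r • A).map fun x => exp (-τ * arccos x)) (𝓝[<] 1)
      (𝓝 (A.map fun x => exp (-τ * arccos x))) := by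
    have hcont : Continuous fun r : ℝ => (r • A).map fun x => exp (-τ * arccos x) := by
      refine continuous_pi fun i => continuous_pi fun j => ?_
      simp only [map_apply, smul_apply, smul_eq_mul]
      fun_prop
    simpa using (hcont.tendsto 1).mono_left nhdsWithin_le_nhds
  exact isClosed_setOf_posSemidef.mem_of_tendsto hlim
    (eventually_of_mem (Ico_mem_nhdsLT one_pos) hscaled)

end Matrix

namespace MeasureTheory

variable {α : Type*} [MeasurableSpace α] {μ : Measure α}

lemma posSemidef_matrix_integral_mul {ι : Type*} [Fintype ι] {f : ι → α → ℝ}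
    (hf : ∀ i, MemLp (f i) 2 μ) : (Matrix.of fun i j => ∫ x, f i x * f j x ∂μ).PosSemidef := by
  have hgram : (Matrix.of fun i j => ∫ x, f i x * f j x ∂μ) =
      Matrix.gram ℝ fun i => (hf i).toLp (f i) := by
    ext i j
    rw [Matrix.gram_apply, L2.inner_def]
    refine integral_congr_ae ?_
    filter_upwards [(hf i).coeFn_toLp, (hf j).coeFn_toLp] with x hi hj
    simp [hi, hj, mul_comm]
  rw [hgram]
  exact Matrix.posSemidef_gram ℝ _

lemma memLp_two_sqrt {ρ : α → ℝ} (hρ : Integrable ρ μ) (h0 : ∀ x, 0 ≤ ρ x) :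
    MemLp (fun x => √(ρ x)) 2 μ := by
  refine (memLp_two_iff_integrable_sq hρ.aemeasurable.sqrt.aestronglyMeasurable).mpr ?_
  simpa only [sq_sqrt (h0 _)] using hρ

lemma integral_sqrt_mul_le {ρ ρ' : α → ℝ} (hρ : Integrable ρ μ) (hρ' : Integrable ρ' μ)
    (h0 : ∀ x, 0 ≤ ρ x) (h0' : ∀ x, 0 ≤ ρ' x) :
    ∫ x, √(ρ x * ρ' x) ∂μ ≤ ((∫ x, ρ x ∂μ) + ∫ x, ρ' x ∂μ) / 2 := by
  rw [← integral_add hρ hρ', ← integral_div]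
  refine integral_mono_of_nonneg (.of_forall fun x => sqrt_nonneg _) ((hρ.add hρ').div_const 2)
    (.of_forall fun x => ?_)
  have := sq_nonneg (√(ρ x) - √(ρ' x))
  dsimp only
  rw [sqrt_mul (h0 x)]
  nlinarith [sq_sqrt (h0 x), sq_sqrt (h0' x)]

end MeasureTheory

/-- The Persistence Fisher kernel `k_PF(ρ, ρ') = exp (-t * d_P(ρ, ρ'))` is infinitely
divisible: for every `m ≥ 1`, the kernel `k_m(ρ, ρ') = exp (-(t/m) * d_P(ρ, ρ'))`
is positive definite on the set of probability densities, and its `m`-th pointwise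
power equals `k_PF`. -/
theorem persistence_fisher_kernel_infinitely_divisible
    {Ω : Type*} [MeasurableSpace Ω] (μ : Measure Ω)
    (t : ℝ) (ht : 0 < t) (m : ℕ) (hm : 1 ≤ m) :
    (∀ (N : ℕ) (ρ : Fin N → Ω → ℝ),
        (∀ i, Measurable (ρ i)) → (∀ i x, 0 ≤ ρ i x) →
        (∀ i, Integrable (ρ i) μ) → (∀ i, ∫ x, ρ i x ∂μ = 1) →
        ∀ c : Fin N → ℝ,
          0 ≤ ∑ i, ∑ j, c i * c j *
              Real.exp (-(t / m) *
                Real.arccos (∫ x, Real.sqrt (ρ i x * ρ j x) ∂μ))) ∧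
    (∀ ρ ρ' : Ω → ℝ,
        Measurable ρ → Measurable ρ' →
        (∀ x, 0 ≤ ρ x) → (∀ x, 0 ≤ ρ' x) →
        Integrable ρ μ → Integrable ρ' μ →
        (∫ x, ρ x ∂μ) = 1 → (∫ x, ρ' x ∂μ) = 1 →
        (Real.exp (-(t / m) *
            Real.arccos (∫ x, Real.sqrt (ρ x * ρ' x) ∂μ))) ^ m =
          Real.exp (-t * Real.arccos (∫ x, Real.sqrt (ρ x * ρ' x) ∂μ))) := by
  refine ⟨fun N ρ _ hρ0 hρ hρ1 c => ?_, fun ρ ρ' _ _ _ _ _ _ _ _ => ?_⟩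
  · have hG : (Matrix.of fun i j => ∫ x, √(ρ i x * ρ j x) ∂μ).PosSemidef := by
      simpa only [sqrt_mul (hρ0 _ _)] using
        posSemidef_matrix_integral_mul fun i => memLp_two_sqrt (hρ i) (hρ0 i)
    have hG_abs_le (i j : Fin N) : |∫ x, √(ρ i x * ρ j x) ∂μ| ≤ 1 := by
      rw [abs_of_nonneg (integral_nonneg fun x => sqrt_nonneg _)]
      simpa [hρ1] using integral_sqrt_mul_le (hρ i) (hρ j) (hρ0 i) (hρ0 j)
    exact (hG.map_exp_neg_mul_arccos hG_abs_le (by positivity)).sum_sum_mul_mul_nonneg c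
  · have hm0 : (m : ℝ) ≠ 0 := by positivity
    rw [← exp_nat_mul]
    congr 1
    field_simp
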